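/- Let |χ⟩ be a unit vector (pure state) on a bipartite system A⊗R, ρ_A = tr_R |χ⟩⟨χ| and ρ_R = tr_A |χ⟩⟨χ|. If weights φ_A on A and φ_R on R satisfy ⟨e^A_i|φ_A|e^A_i⟩ = ⟨e^R_i|φ_R|e^R_i⟩ for all i with 0 < λᵢ < 1 (where λᵢ are the common nonzero eigenvalues of ρ_A and ρ_R, with eigenvectors |e^A_i⟩, |e^R_i⟩ matched by the Schmidt decomposition of |χ⟩), then S_{φ_A}(ρ_A) = S_{φ_R}(ρ_R). -/

import Mathlib

open Matrix BigOperators ComplexOrder Kronecker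

/-- Functional calculus for Hermitian matrices: `matFun f A = Σ f(λᵢ) |eᵢ⟩⟨eᵢ|`
(defined to be `0` if `A` is not Hermitian). -/
noncomputable def matFun {n : Type*} [Fintype n] [DecidableEq n]
    (f : ℝ → ℝ) (A : Matrix n n ℂ) : Matrix n n ℂ :=
  if hA : A.IsHermitian then
    (Matrix.IsHermitian.eigenvectorUnitary hA : Matrix n n ℂ) *
      Matrix.diagonal (fun i => (f (hA.eigenvalues i) : ℂ)) *
      star (Matrix.IsHermitian.eigenvectorUnitary hA : Matrix n n ℂ)
  else 0

/-- Matrix logarithm via functional calculus. -/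
noncomputable def matLog {n : Type*} [Fintype n] [DecidableEq n]
    (A : Matrix n n ℂ) : Matrix n n ℂ := matFun Real.log A

/-- Quantum weighted entropy `S_φ(ρ) = -tr (φ ρ log ρ)`, where `ρ log ρ` is defined by
functional calculus with the convention `0 log 0 = 0` (note `Real.log 0 = 0`). -/
noncomputable def wEnt {n : Type*} [Fintype n] [DecidableEq n]
    (φ ρ : Matrix n n ℂ) : ℂ :=
  -(φ * matFun (fun x => x * Real.log x) ρ).trace

/-- Partial trace over the second (right) factor. -/
noncomputable def ptraceR {a b : Type*} [Fintype a] [Fintype b]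
    (M : Matrix (a × b) (a × b) ℂ) : Matrix a a ℂ :=
  Matrix.of fun i j => ∑ k, M (i, k) (j, k)

/-- Partial trace over the first (left) factor. -/
noncomputable def ptraceL {a b : Type*} [Fintype a] [Fintype b]
    (M : Matrix (a × b) (a × b) ℂ) : Matrix b b ℂ :=
  Matrix.of fun i j => ∑ k, M (k, i) (k, j)

/-!
By the Schmidt decomposition and the orthonormality of the `e^R_i`, the reduced state is
`ρ_A = Σ λᵢ |e^A_i⟩⟨e^A_i|`, and symmetrically `ρ_R = Σ λᵢ |e^R_i⟩⟨e^R_i|`. On such an orthonormal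
expansion the functional calculus acts on the coefficients, `f(ρ) = Σ f(λᵢ) |eᵢ⟩⟨eᵢ|` whenever
`f 0 = 0`: replace `f` by a polynomial interpolating it on the eigenvalues, the `λᵢ` and `0`, and
use `ρ |eᵢ⟩⟨eᵢ| = λᵢ |eᵢ⟩⟨eᵢ|`. Hence `S_φ(ρ_A) = -Σ λᵢ log λᵢ ⟨e^A_i|φ_A|e^A_i⟩`, and likewise for
`R`. As `Σ λᵢ = tr ρ_A = ⟨χ|χ⟩ = 1`, each `λᵢ` lies in `[0, 1]`; the terms with `λᵢ ∈ {0, 1}`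
vanish, and the hypothesis on the weights matches the remaining ones.
-/

open Polynomial

theorem Polynomial.aeval_mul_eq_smul_of_mul_eq_smul {R A : Type*} [CommSemiring R] [Semiring A]
    [Algebra R A] {a b : A} {r : R} (h : a * b = r • b) (q : R[X]) :
    aeval a q * b = q.eval r • b := by
  have hpow : ∀ k : ℕ, a ^ k * b = r ^ k • b := by
    intro k
    induction k with
    | zero => simp
    | succ k ih => rw [pow_succ, mul_assoc, h, mul_smul_comm, ih, smul_smul, pow_succ']
  induction q using Polynomial.induction_on' with
  | add p q hp hq => rw [map_add, add_mul, hp, hq, eval_add, add_smul]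
  | monomial k c => rw [aeval_monomial, ← Algebra.smul_def, smul_mul_assoc, hpow, smul_smul,
      eval_monomial]

theorem Polynomial.exists_eval_eq_on_finset {F : Type*} [Field F] (s : Finset F) (f : F → F) :
    ∃ q : F[X], ∀ x ∈ s, q.eval x = f x := by
  classical
  exact ⟨Lagrange.interpolate s id f, fun _ hx =>
    Lagrange.eval_interpolate_at_node f (Set.injOn_id _) hx⟩

theorem matFun_eq_aeval {n : Type*} [Fintype n] [DecidableEq n] {f : ℝ → ℝ}
    {A : Matrix n n ℂ} (hA : A.IsHermitian) {q : ℝ[X]}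
    (hq : ∀ i, q.eval (hA.eigenvalues i) = f (hA.eigenvalues i)) :
    matFun f A = aeval A q := by
  have hspec : Set.EqOn f q.eval (spectrum ℝ A) := by
    rw [hA.spectrum_real_eq_range_eigenvalues]
    rintro _ ⟨i, rfl⟩
    exact (hq i).symm
  rw [← cfc_polynomial q A, ← cfc_congr hspec, hA.cfc_eq, Matrix.IsHermitian.cfc,
    Unitary.conjStarAlgAut_apply, matFun, dif_pos hA]
  rfl

section SpectralSum

variable {n ι : Type*} [Fintype n] [Fintype ι]

noncomputable def spectralSum (lam : ι → ℝ) (v : ι → n → ℂ) : Matrix n n ℂ :=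
  ∑ i, lam i • vecMulVec (v i) (star (v i))

theorem isHermitian_spectralSum (lam : ι → ℝ) (v : ι → n → ℂ) :
    (spectralSum lam v).IsHermitian :=
  isSelfAdjoint_sum _ fun i _ =>
    (posSemidef_vecMulVec_self_star (v i)).isHermitian.smul (IsSelfAdjoint.all (lam i))

theorem trace_mul_spectralSum (φ : Matrix n n ℂ) (lam : ι → ℝ) (v : ι → n → ℂ) :
    (φ * spectralSum lam v).trace = ∑ i, lam i * (star (v i) ⬝ᵥ φ *ᵥ v i) := by
  simp only [spectralSum, Finset.mul_sum, trace_sum, mul_smul_comm, trace_smul, mul_vecMulVec,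
    trace_vecMulVec, dotProduct_comm _ (star _), Complex.real_smul]

variable [DecidableEq ι]

def IsOrthonormal (v : ι → n → ℂ) : Prop :=
  ∀ i j, star (v i) ⬝ᵥ v j = if i = j then 1 else 0

theorem spectralSum_mul_vecMulVec {v : ι → n → ℂ} (hv : IsOrthonormal v) (lam : ι → ℝ) (j : ι) :
    spectralSum lam v * vecMulVec (v j) (star (v j)) = lam j • vecMulVec (v j) (star (v j)) := by
  rw [spectralSum, Finset.sum_mul, Fintype.sum_eq_single j]
  · rw [smul_mul_assoc, vecMulVec_mul_vecMulVec, hv, if_pos rfl, one_smul]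
  · intro i hi
    rw [smul_mul_assoc, vecMulVec_mul_vecMulVec, hv, if_neg hi, zero_smul, vecMulVec_zero,
      smul_zero]

variable [DecidableEq n]

theorem trace_spectralSum {v : ι → n → ℂ} (hv : IsOrthonormal v) (lam : ι → ℝ) :
    (spectralSum lam v).trace = ∑ i, (lam i : ℂ) := by
  rw [← one_mul (spectralSum lam v), trace_mul_spectralSum]
  simp [one_mulVec, hv _ _]

theorem aeval_spectralSum {v : ι → n → ℂ} (hv : IsOrthonormal v) (lam : ι → ℝ) {q : ℝ[X]}
    (hq : q.eval 0 = 0) :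
    aeval (spectralSum lam v) q = spectralSum (fun i => q.eval (lam i)) v := by
  obtain ⟨p, rfl⟩ : X ∣ q := X_dvd_iff.mpr (by rwa [coeff_zero_eq_eval_zero])
  rw [mul_comm, map_mul, aeval_X]
  conv_rhs => rw [spectralSum]
  nth_rw 2 [spectralSum]
  rw [Finset.mul_sum]
  refine Finset.sum_congr rfl fun i _ => ?_
  rw [mul_smul_comm, aeval_mul_eq_smul_of_mul_eq_smul (spectralSum_mul_vecMulVec hv lam i),
    smul_smul, eval_mul, eval_X, mul_comm]

theorem matFun_spectralSum {v : ι → n → ℂ} (hv : IsOrthonormal v) (lam : ι → ℝ) {f : ℝ → ℝ}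
    (hf : f 0 = 0) :
    matFun f (spectralSum lam v) = spectralSum (fun i => f (lam i)) v := by
  have hH := isHermitian_spectralSum lam v
  obtain ⟨q, hq⟩ := exists_eval_eq_on_finset
    (insert 0 (Finset.univ.image hH.eigenvalues ∪ Finset.univ.image lam)) f
  rw [matFun_eq_aeval hH fun i => hq (hH.eigenvalues i) (by simp),
    aeval_spectralSum hv lam (by simp [hq, hf])]
  simp_rw [hq (lam _) (by simp)]

end SpectralSum

theorem ptraceR_vecMulVec_star_of_schmidt {a r ι : Type*} [Fintype a] [Fintype r] [Fintype ι]
    [DecidableEq ι] {χ : a × r → ℂ} {lam : ι → ℝ} (hlam : ∀ i, 0 ≤ lam i) {u : ι → a → ℂ}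
    {w : ι → r → ℂ} (hw : IsOrthonormal w)
    (hχ : ∀ p : a × r, χ p = ∑ i, (Real.sqrt (lam i) : ℂ) * u i p.1 * w i p.2) :
    ptraceR (vecMulVec χ (star χ)) = spectralSum lam u := by
  ext x y
  have hw' : ∀ i j, ∑ k, w i k * star (w j k) = if j = i then 1 else 0 := fun i j => by
    rw [← hw j i, dotProduct]
    simp only [Pi.star_apply, mul_comm]
  calc ptraceR (vecMulVec χ (star χ)) x y = ∑ k, χ (x, k) * star (χ (y, k)) := rfl
    _ = ∑ i, ∑ j, (Real.sqrt (lam i) * Real.sqrt (lam j) : ℂ) * (u i x * star (u j y)) *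
          ∑ k, w i k * star (w j k) := by
      simp only [hχ, star_sum, star_mul', Complex.star_def, Complex.conj_ofReal, Finset.sum_mul,
        Finset.mul_sum]
      conv_rhs => rw [Finset.sum_comm]
      rw [Finset.sum_comm]
      refine Finset.sum_congr rfl fun i _ => ?_
      rw [Finset.sum_comm]
      refine Finset.sum_congr rfl fun j _ => Finset.sum_congr rfl fun k _ => ?_
      ring
    _ = spectralSum lam u x y := by
      simp only [hw', mul_ite, mul_one, mul_zero, Finset.sum_ite_eq', Finset.mem_univ, if_true,
        spectralSum, Matrix.sum_apply, Matrix.smul_apply, vecMulVec_apply, Pi.star_apply]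
      refine Finset.sum_congr rfl fun i _ => ?_
      rw [← Complex.ofReal_mul, Real.mul_self_sqrt (hlam i), Complex.real_smul]

theorem trace_ptraceR {a b : Type*} [Fintype a] [Fintype b] (M : Matrix (a × b) (a × b) ℂ) :
    (ptraceR M).trace = M.trace := by
  simp [trace, ptraceR, Fintype.sum_prod_type]

theorem wEnt_spectralSum {n ι : Type*} [Fintype n] [DecidableEq n] [Fintype ι] [DecidableEq ι]
    {v : ι → n → ℂ} (hv : IsOrthonormal v) (φ : Matrix n n ℂ) (lam : ι → ℝ) :
    wEnt φ (spectralSum lam v) =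
      -∑ i, ((lam i * Real.log (lam i) : ℝ) : ℂ) * (star (v i) ⬝ᵥ φ *ᵥ v i) := by
  rw [wEnt, matFun_spectralSum hv lam (by simp), trace_mul_spectralSum]

theorem wEnt_purification_general {a r ι : Type*} [Fintype a] [DecidableEq a]
    [Fintype r] [DecidableEq r] [Fintype ι] [DecidableEq ι]
    (χ : a × r → ℂ) (hχ : star χ ⬝ᵥ χ = 1)
    (lam : ι → ℝ) (hlam : ∀ i, 0 ≤ lam i)
    (eA : ι → (a → ℂ)) (eR : ι → (r → ℂ))
    (horthA : ∀ i j, star (eA i) ⬝ᵥ eA j = if i = j then 1 else 0)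
    (horthR : ∀ i j, star (eR i) ⬝ᵥ eR j = if i = j then 1 else 0)
    (hSchmidt : ∀ p : a × r, χ p = ∑ i, (Real.sqrt (lam i) : ℂ) * eA i p.1 * eR i p.2)
    (φA : Matrix a a ℂ) (φR : Matrix r r ℂ)
    (hconj : ∀ i, 0 < lam i → lam i < 1 →
      star (eA i) ⬝ᵥ φA *ᵥ eA i = star (eR i) ⬝ᵥ φR *ᵥ eR i) :
    wEnt φA (ptraceR (Matrix.vecMulVec χ (star χ))) =
      wEnt φR (ptraceL (Matrix.vecMulVec χ (star χ))) := by
  have hρA : ptraceR (vecMulVec χ (star χ)) = spectralSum lam eA :=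
    ptraceR_vecMulVec_star_of_schmidt hlam horthR hSchmidt
  have hρR : ptraceL (vecMulVec χ (star χ)) = spectralSum lam eR :=
    ptraceR_vecMulVec_star_of_schmidt (χ := χ ∘ Prod.swap) hlam horthA fun p => by
      simp only [Function.comp_apply, hSchmidt, Prod.fst_swap, Prod.snd_swap, mul_right_comm]
  have hsum : ∑ i, lam i = 1 := by
    have htr := trace_spectralSum horthA lam
    rw [← hρA, trace_ptraceR, trace_vecMulVec, dotProduct_comm, hχ] at htr
    exact_mod_cast htr.symm
  rw [hρA, hρR, wEnt_spectralSum horthA, wEnt_spectralSum horthR, neg_inj]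
  refine Finset.sum_congr rfl fun i _ => ?_
  have hle : lam i ≤ 1 := hsum ▸ Finset.single_le_sum (fun j _ => hlam j) (Finset.mem_univ i)
  rcases (hlam i).eq_or_lt with h0 | hpos
  · simp [← h0]
  rcases hle.lt_or_eq with hlt | h1
  · rw [hconj i hpos hlt]
  · simp [h1]

/-- Purification identity for quantum weighted entropy: if `|χ⟩ = Σᵢ √λᵢ |e^A_i⟩⊗|e^R_i⟩`
is a Schmidt-decomposed pure state on `A ⊗ R`, with reduced states
`ρ_A = tr_R |χ⟩⟨χ|`, `ρ_R = tr_A |χ⟩⟨χ|`, and the weights `φ_A`, `φ_R` satisfy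
`⟨e^A_i|φ_A|e^A_i⟩ = ⟨e^R_i|φ_R|e^R_i⟩` whenever `0 < λᵢ < 1`, then
`S_{φ_A}(ρ_A) = S_{φ_R}(ρ_R)`. -/
theorem wEnt_purification {a r ι : Type*} [Fintype a] [DecidableEq a]
    [Fintype r] [DecidableEq r] [Fintype ι] [DecidableEq ι]
    (χ : a × r → ℂ) (hχ : star χ ⬝ᵥ χ = 1)
    (lam : ι → ℝ) (hlam : ∀ i, 0 ≤ lam i)
    (eA : ι → (a → ℂ)) (eR : ι → (r → ℂ))
    (horthA : ∀ i j, star (eA i) ⬝ᵥ eA j = if i = j then 1 else 0)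
    (horthR : ∀ i j, star (eR i) ⬝ᵥ eR j = if i = j then 1 else 0)
    (hSchmidt : ∀ p : a × r, χ p = ∑ i, (Real.sqrt (lam i) : ℂ) * eA i p.1 * eR i p.2)
    (φA : Matrix a a ℂ) (φR : Matrix r r ℂ) (hφA : φA.PosSemidef) (hφR : φR.PosSemidef)
    (hconj : ∀ i, 0 < lam i → lam i < 1 →
      star (eA i) ⬝ᵥ φA *ᵥ eA i = star (eR i) ⬝ᵥ φR *ᵥ eR i) :
    wEnt φA (ptraceR (Matrix.vecMulVec χ (star χ))) =
      wEnt φR (ptraceL (Matrix.vecMulVec χ (star χ))) :=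
  wEnt_purification_general χ hχ lam hlam eA eR horthA horthR hSchmidt φA φR hconj
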